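/- The row space of the constraint matrix 𝒮^{(n_1,...,n_m)} and the row space of the parametrization matrix 𝒜^{(n_1,...,n_m)} are orthogonal complements of each other in ℝ^N, where N is the common number of columns (the number of directed edges of the grid). -/

import Mathlib

/-!
Each row of `𝒜` is orthogonal to each row of `𝒮`: around a unit square the vertex terms
telescope, and opposite sides are parallel edges at the same level, so they carry the same edge
parameter.

Conversely, let `x` be orthogonal to the rows of `𝒮`. Subtracting the relations (3.1) of a
square from one another shows that the symmetric part `x(u,v) + x(v,u)` of an edge does not
change under translations perpendicular to it, so it equals `2 W(k, h)` for a function `W` of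
the direction `k` and level `h` alone; and that the upward part `x(u, u + e_k) - W(k, u_k)` is
curl-free. Summing it along staircase paths from the origin gives a potential `-a`, and then
`x(u,v) = a_u - a_v + W(edge)` exhibits `x` as a combination of the rows of `𝒜`.

Finally, in finite dimension the row space of `𝒮` is the annihilator of `ker 𝒮`, which is now
known to be the row space of `𝒜`; this gives the second complement.
-/

/-- Vertices of the grid `{0,…,n₁} × ⋯ × {0,…,n_m}`. -/
abbrev GridV (m : ℕ) (n : Fin m → ℕ) := ∀ k : Fin m, Fin (n k + 1)

/-- `u` and `v` are nearest neighbors in direction `k`, i.e. `u - v ∈ {±e_k}`. -/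
abbrev gridAdjDir {m : ℕ} {n : Fin m → ℕ} (k : Fin m) (u v : GridV m n) : Prop :=
  (∀ l, l ≠ k → u l = v l) ∧ ((u k : ℕ) + 1 = (v k : ℕ) ∨ (v k : ℕ) + 1 = (u k : ℕ))

/-- Nearest-neighbor relation `u ∼ v` on the grid. -/
abbrev gridAdj {m : ℕ} {n : Fin m → ℕ} (u v : GridV m n) : Prop :=
  ∃ k, gridAdjDir k u v

/-- Directed edges of the grid. -/
abbrev DirEdge (m : ℕ) (n : Fin m → ℕ) := {p : GridV m n × GridV m n // gridAdj p.1 p.2}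

/-- Row indices of the parametrization matrix `𝒜`. -/
abbrev ParamRow (m : ℕ) (n : Fin m → ℕ) := (GridV m n) ⊕ (Σ k : Fin m, Fin (n k))

/-- The parametrization matrix `𝒜^{(n₁,…,n_m)}`. -/
def paramMatrix (m : ℕ) (n : Fin m → ℕ) : Matrix (ParamRow m n) (DirEdge m n) ℝ :=
  fun r e =>
    match r with
    | Sum.inl u => (if u = e.1.1 then 1 else 0) - (if u = e.1.2 then 1 else 0)
    | Sum.inr ⟨k, h⟩ =>
        if gridAdjDir k e.1.1 e.1.2 ∧ min (e.1.1 k : ℕ) (e.1.2 k : ℕ) = (h : ℕ)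
        then 1 else 0

/-- Unit squares of the grid. -/
abbrev SquareIdx (m : ℕ) (n : Fin m → ℕ) :=
  {q : (Fin m × Fin m) × GridV m n //
    q.1.1 < q.1.2 ∧ (q.2 q.1.1 : ℕ) < n q.1.1 ∧ (q.2 q.1.2 : ℕ) < n q.1.2}

/-- Move one step in direction `i`. -/
def bump {m : ℕ} {n : Fin m → ℕ} (u : GridV m n) (i : Fin m) : GridV m n :=
  Function.update u i (u i + 1)

/-- The constraint matrix `𝒮^{(n₁,…,n_m)}` of the relations (3.1). -/
def consMatrix (m : ℕ) (n : Fin m → ℕ) :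
    Matrix (SquareIdx m n × Fin 4) (DirEdge m n) ℝ :=
  fun r e =>
    let i := r.1.1.1.1
    let j := r.1.1.1.2
    let u := r.1.1.2
    let c : Fin 4 → GridV m n := ![u, bump u i, bump (bump u i) j, bump u j]
    let s := r.2
    (if e.1 = (c s, c (s + 1)) then (1 : ℝ) else 0) +
      (if e.1 = (c (s + 1), c (s + 2)) then 1 else 0) -
      (if e.1 = (c s, c (s + 3)) then 1 else 0) -
      (if e.1 = (c (s + 3), c (s + 2)) then 1 else 0)

open Matrix Submodule

namespace Matrix

theorem mem_span_range_iff_exists_vecMul {R ι κ : Type*} [Semiring R] [Fintype ι]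
    (M : Matrix ι κ R) (x : κ → R) : x ∈ span R (Set.range M) ↔ ∃ v, v ᵥ* M = x := by
  rw [show span R (Set.range M) = LinearMap.range M.vecMulLinear from (range_vecMulLinear M).symm]
  rfl

variable {K ι ρ κ : Type*} [Field K] [Fintype κ]

theorem mem_span_range_iff_forall_dotProduct (S : Matrix ρ κ K) (x : κ → K) :
    x ∈ span K (Set.range S) ↔ ∀ y, S *ᵥ y = 0 → y ⬝ᵥ x = 0 := by
  classical
  conv_lhs => rw [← Subspace.dualAnnihilator_dualCoannihilator_eq (W := span K (Set.range S))]
  rw [mem_dualCoannihilator, ← (dotProductEquiv K κ).forall_congr_right]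
  refine forall_congr' fun y => imp_congr_left ?_
  rw [mem_dualAnnihilator]
  change span K _ ≤ LinearMap.ker (dotProductEquiv K κ y) ↔ _
  refine span_le.trans (Set.range_subset_iff.trans ?_)
  simp [funext_iff, mulVec, dotProduct_comm]

variable [Fintype ι] {A : Matrix ι κ K} {S : Matrix ρ κ K}

theorem mulVec_eq_zero_of_mem_span_range (hSA : S * Aᵀ = 0) {x : κ → K}
    (hx : x ∈ span K (Set.range A)) : S *ᵥ x = 0 := by
  obtain ⟨v, rfl⟩ := (mem_span_range_iff_exists_vecMul A x).1 hx
  rw [← mulVec_transpose, mulVec_mulVec, hSA, zero_mulVec]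

theorem mem_span_range_iff_mulVec_eq_zero (hSA : S * Aᵀ = 0)
    (hker : ∀ x, S *ᵥ x = 0 → x ∈ span K (Set.range A)) (x : κ → K) :
    x ∈ span K (Set.range S) ↔ A *ᵥ x = 0 := by
  have hkerS : ∀ y, S *ᵥ y = 0 ↔ ∃ v, v ᵥ* A = y := fun y => by
    rw [← mem_span_range_iff_exists_vecMul]
    exact ⟨hker y, mulVec_eq_zero_of_mem_span_range hSA⟩
  simp_rw [mem_span_range_iff_forall_dotProduct, hkerS, forall_exists_index,
    forall_apply_eq_imp_iff, ← dotProduct_mulVec, dotProduct_comm _ (A *ᵥ x),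
    dotProduct_eq_zero_iff]

end Matrix

section Grid

variable {m : ℕ} {n : Fin m → ℕ}

theorem bump_apply_of_ne (u : GridV m n) {i l : Fin m} (h : l ≠ i) : bump u i l = u l :=
  Function.update_of_ne h _ _

theorem val_bump (u : GridV m n) {i : Fin m} (hi : (u i : ℕ) < n i) (l : Fin m) :
    (bump u i l : ℕ) = if l = i then (u i : ℕ) + 1 else u l := by
  split_ifs with h
  · subst h
    rw [bump, Function.update_self, Fin.val_add_one_of_lt' (by omega)]
  · rw [bump_apply_of_ne u h]

theorem bump_comm (u : GridV m n) {i j : Fin m} (hij : i ≠ j) :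
    bump (bump u i) j = bump (bump u j) i := by
  simp only [bump, Function.update_of_ne hij, Function.update_of_ne hij.symm,
    Function.update_comm hij]

theorem gridAdjDir.symm {k : Fin m} {u v : GridV m n} (h : gridAdjDir k u v) :
    gridAdjDir k v u :=
  ⟨fun l hl => (h.1 l hl).symm, h.2.symm⟩

theorem gridAdjDir_bump {u : GridV m n} {i : Fin m} (hi : (u i : ℕ) < n i) :
    gridAdjDir i u (bump u i) :=
  ⟨fun l hl => (bump_apply_of_ne u hl).symm, Or.inl (by rw [val_bump u hi, if_pos rfl])⟩

theorem gridAdjDir.unique {k k' : Fin m} {u v : GridV m n} (h : gridAdjDir k u v)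
    (h' : gridAdjDir k' u v) : k = k' := by
  by_contra hne
  have := h'.2
  rw [h.1 k' (Ne.symm hne)] at this
  omega

theorem gridAdjDir.eq_bump {k : Fin m} {u v : GridV m n} (h : gridAdjDir k u v) :
    ((u k : ℕ) < n k ∧ v = bump u k) ∨ ((v k : ℕ) < n k ∧ u = bump v k) := by
  have hu := (u k).isLt
  have hv := (v k).isLt
  have key : ∀ {p q : GridV m n}, (∀ l, l ≠ k → p l = q l) → (p k : ℕ) + 1 = q k →
      (p k : ℕ) < n k ∧ q = bump p k := fun hpq hk => by
    refine ⟨by omega, funext fun l => Fin.ext ?_⟩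
    rw [val_bump _ (by omega)]
    split_ifs with hl
    · subst hl; omega
    · rw [hpq l hl]
  rcases h.2 with hk | hk
  · exact Or.inl (key h.1 hk)
  · exact Or.inr (key (fun l hl => (h.1 l hl).symm) hk)

theorem apply_update_eq_apply_update_zero {α : Type*} {f : GridV m n → α} {w : GridV m n}
    {l : Fin m} (hf : ∀ i : Fin (n l),
      f (bump (Function.update w l i.castSucc) l) = f (Function.update w l i.castSucc))
    (i : Fin (n l + 1)) : f (Function.update w l i) = f (Function.update w l 0) := by
  induction i using Fin.induction with
  | zero => rfl
  | succ i ih =>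
    have hstep : bump (Function.update w l i.castSucc) l = Function.update w l i.succ := by
      simp [bump, Fin.coeSucc_eq_succ]
    rw [← ih, ← hstep, hf]

theorem apply_eq_apply_single_of_bump {α : Type*} {f : GridV m n → α} {k : Fin m}
    {v : GridV m n} (hf : ∀ w l, l ≠ k → w k = v k → (w l : ℕ) < n l → f (bump w l) = f w) :
    f v = f (Pi.single k (v k)) := by
  classical
  have zero_out : ∀ T : Finset (Fin m), k ∉ T → f v = f (T.piecewise 0 v) := by
    intro T
    induction T using Finset.induction_on with
    | empty => simp
    | insert a T haT ih =>
      intro hk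
      have hak : a ≠ k := fun h => hk (h ▸ Finset.mem_insert_self a T)
      have hkT : k ∉ T := fun h => hk (Finset.mem_insert_of_mem h)
      have hline := apply_update_eq_apply_update_zero (f := f) (w := T.piecewise 0 v) (l := a)
        (fun i => hf _ a hak (by simp [Function.update_of_ne hak.symm, Finset.piecewise, hkT])
          (by simp)) (T.piecewise 0 v a)
      rw [Finset.piecewise_insert, ih hkT, Pi.zero_apply, ← hline, Function.update_eq_self]
  rw [zero_out _ (Finset.notMem_erase k Finset.univ)]
  congr 1
  funext l
  by_cases hl : l = k
  · subst hl; simp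
  · simp [Finset.piecewise, hl]

section Potential

variable {M : Type*} [AddCommGroup M]

def IsCurlFree (z : Fin m → GridV m n → M) : Prop :=
  ∀ u i j, i ≠ j → (u i : ℕ) < n i → (u j : ℕ) < n j →
    z i u + z j (bump u i) = z j u + z i (bump u j)

def stair (u : GridV m n) (j t : ℕ) : GridV m n := fun l =>
  ⟨if (l : ℕ) < j then (u l : ℕ) else if (l : ℕ) = j then min t (n l) else 0, by
    split_ifs <;> omega⟩

theorem val_stair (u : GridV m n) (j t : ℕ) (l : Fin m) :
    (stair u j t l : ℕ) =
      if (l : ℕ) < j then (u l : ℕ) else if (l : ℕ) = j then min t (n l) else 0 :=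
  rfl

theorem stair_bump_of_le (u : GridV m n) {k : Fin m} (hk : (u k : ℕ) < n k) {j : ℕ}
    (hj : j ≤ k) (t : ℕ) : stair (bump u k) j t = stair u j t := by
  funext l
  apply Fin.ext
  simp only [val_stair, val_bump u hk, Fin.ext_iff]
  split_ifs <;> omega

theorem stair_bump_of_lt (u : GridV m n) {k : Fin m} (hk : (u k : ℕ) < n k) {j : ℕ}
    (hj : k < j) (t : ℕ) : stair (bump u k) j t = bump (stair u j t) k := by
  have hk' : (stair u j t k : ℕ) < n k := by rw [val_stair, if_pos hj]; exact hk
  funext l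
  apply Fin.ext
  simp only [val_stair, val_bump u hk, val_bump _ hk', Fin.ext_iff]
  split_ifs <;> omega

theorem bump_stair (u : GridV m n) (j : Fin m) {t : ℕ} (ht : t < n j) :
    bump (stair u j t) j = stair u j (t + 1) := by
  have hj : (stair u j t j : ℕ) < n j := by simp only [val_stair]; split_ifs <;> omega
  funext l
  apply Fin.ext
  rcases eq_or_ne l j with rfl | hlj
  · simp only [val_stair, val_bump _ hj]
    split_ifs <;> omega
  · have := Fin.val_ne_of_ne hlj
    simp only [val_stair, val_bump _ hj, if_neg hlj]
    split_ifs <;> omega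

theorem stair_self_eq_succ_zero (u : GridV m n) (j : Fin m) :
    stair u j (u j) = stair u (j + 1) 0 := by
  funext l
  apply Fin.ext
  rcases eq_or_ne l j with rfl | hlj
  · have := (u l).isLt
    simp only [val_stair]
    split_ifs <;> omega
  · have := Fin.val_ne_of_ne hlj
    simp only [val_stair]
    split_ifs <;> omega

theorem stair_of_le (u : GridV m n) {j : ℕ} (hj : m ≤ j) (t : ℕ) : stair u j t = u := by
  funext l
  apply Fin.ext
  rw [val_stair, if_pos (by omega)]

/-- The sum of `z` along the staircase path from `0` to `u` that raises the coordinates in the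
order `0, 1, …, m - 1`. -/
def potential (z : Fin m → GridV m n → M) (u : GridV m n) : M :=
  ∑ j : Fin m, ∑ t ∈ Finset.range (u j), z j (stair u j t)

/-- The right side is `g (j + 1) - g j` for `g j = z k (stair u j 0)` if `k < j` and `0` otherwise,
so summing over `j` telescopes to `z k u`. -/
theorem sum_stair_bump_sub {z : Fin m → GridV m n → M} (hz : IsCurlFree z) {u : GridV m n}
    {k : Fin m} (hk : (u k : ℕ) < n k) (j : Fin m) :
    ∑ t ∈ Finset.range (bump u k j), z j (stair (bump u k) j t) -
        ∑ t ∈ Finset.range (u j), z j (stair u j t) =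
      (if (j : ℕ) + 1 ≤ k then 0 else z k (stair u (j + 1) 0)) -
        if (j : ℕ) ≤ k then 0 else z k (stair u j 0) := by
  rcases lt_trichotomy j k with hjk | rfl | hjk
  · rw [bump_apply_of_ne u hjk.ne, if_pos (by omega), if_pos (by omega)]
    simp only [stair_bump_of_le u hk (by omega : (j : ℕ) ≤ k), sub_self]
  · rw [val_bump u hk, if_pos rfl, if_neg (by omega), if_pos le_rfl, Finset.sum_range_succ]
    simp only [stair_bump_of_le u hk le_rfl, stair_self_eq_succ_zero, sub_zero,
      add_sub_cancel_left]
  · rw [bump_apply_of_ne u hjk.ne', if_neg (by omega), if_neg (by omega),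
      ← stair_self_eq_succ_zero, ← Finset.sum_range_sub fun t => z k (stair u j t),
      ← Finset.sum_sub_distrib]
    refine Finset.sum_congr rfl fun t ht => ?_
    have ht : t < u j := Finset.mem_range.1 ht
    have hcurl := hz (stair u j t) k j hjk.ne (by rw [val_stair, if_pos (by omega)]; exact hk)
      (by simp only [val_stair]; split_ifs <;> omega)
    rw [bump_stair u j (by omega)] at hcurl
    rw [stair_bump_of_lt u hk (by omega), sub_eq_sub_iff_add_eq_add, add_comm, hcurl, add_comm]

theorem potential_bump_sub {z : Fin m → GridV m n → M} (hz : IsCurlFree z) {u : GridV m n}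
    {k : Fin m} (hk : (u k : ℕ) < n k) : potential z (bump u k) - potential z u = z k u := by
  rw [potential, potential, ← Finset.sum_sub_distrib,
    Finset.sum_congr rfl fun j _ => sum_stair_bump_sub hz hk j,
    Fin.sum_univ_eq_sum_range (fun j => (if j + 1 ≤ k then 0 else z k (stair u (j + 1) 0)) -
      if j ≤ k then 0 else z k (stair u j 0)), Finset.sum_range_sub (fun j =>
        if j ≤ k then 0 else z k (stair u j 0)), if_neg (by omega), if_pos (Nat.zero_le _),
    stair_of_le u le_rfl, sub_zero]

end Potential

section Edges

variable {R : Type*}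

def edgeVal [Zero R] (x : DirEdge m n → R) (p q : GridV m n) : R :=
  if h : gridAdj p q then x ⟨(p, q), h⟩ else 0

theorem edgeVal_of_adj [Zero R] (x : DirEdge m n → R) {p q : GridV m n} (h : gridAdj p q) :
    edgeVal x p q = x ⟨(p, q), h⟩ :=
  dif_pos h

theorem sum_ite_mul_eq_edgeVal [Semiring R] (x : DirEdge m n → R) (p q : GridV m n) :
    ∑ e : DirEdge m n, (if e.1 = (p, q) then (1 : R) else 0) * x e = edgeVal x p q := by
  by_cases h : gridAdj p q
  · rw [edgeVal_of_adj x h, Fintype.sum_eq_single ⟨(p, q), h⟩ fun e he => by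
      rw [if_neg fun hpq => he (Subtype.ext hpq), zero_mul]]
    simp
  · rw [edgeVal, dif_neg h]
    refine Finset.sum_eq_zero fun e _ => ?_
    rw [if_neg fun hpq => h (by simpa [hpq] using e.2), zero_mul]

def circulation [AddCommGroup R] (x : DirEdge m n → R) (a b c d : GridV m n) : R :=
  edgeVal x a b + edgeVal x b c - edgeVal x a d - edgeVal x d c

def SquareIdx.corner (q : SquareIdx m n) : Fin 4 → GridV m n :=
  ![q.1.2, bump q.1.2 q.1.1.1, bump (bump q.1.2 q.1.1.1) q.1.1.2, bump q.1.2 q.1.1.2]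

theorem consMatrix_mulVec (x : DirEdge m n → ℝ) (q : SquareIdx m n) (s : Fin 4) :
    (consMatrix m n *ᵥ x) (q, s) =
      circulation x (q.corner s) (q.corner (s + 1)) (q.corner (s + 2)) (q.corner (s + 3)) := by
  simp only [Matrix.mulVec, dotProduct, consMatrix, add_mul, sub_mul, Finset.sum_add_distrib,
    Finset.sum_sub_distrib, sum_ite_mul_eq_edgeVal]
  rfl

end Edges

section Orthogonality

def IsUnitSquare (a b c d : GridV m n) : Prop :=
  ∃ i j, gridAdjDir i a b ∧ gridAdjDir i d c ∧ min (a i : ℕ) (b i) = min (d i : ℕ) (c i) ∧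
    gridAdjDir j b c ∧ gridAdjDir j a d ∧ min (b j : ℕ) (c j) = min (a j : ℕ) (d j)

theorem IsUnitSquare.rotate {a b c d : GridV m n} (h : IsUnitSquare a b c d) :
    IsUnitSquare b c d a := by
  obtain ⟨i, j, hab, hdc, hi, hbc, had, hj⟩ := h
  exact ⟨j, i, hbc, had, hj, hdc.symm, hab.symm, by rw [min_comm (c i : ℕ), hi.symm, min_comm]⟩

theorem isUnitSquare_corner (q : SquareIdx m n) (s : Fin 4) :
    IsUnitSquare (q.corner s) (q.corner (s + 1)) (q.corner (s + 2)) (q.corner (s + 3)) := by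
  obtain ⟨⟨⟨i, j⟩, u⟩, hij, hi, hj⟩ := q
  have hji : j ≠ i := (ne_of_lt hij).symm
  have hj' : (bump u i j : ℕ) < n j := by rwa [bump_apply_of_ne u hji]
  have hi' : (bump u j i : ℕ) < n i := by rwa [bump_apply_of_ne u hji.symm]
  have h0 : IsUnitSquare u (bump u i) (bump (bump u i) j) (bump u j) := by
    refine ⟨i, j, gridAdjDir_bump hi, bump_comm u hji ▸ gridAdjDir_bump hi', ?_,
      gridAdjDir_bump hj', gridAdjDir_bump hj, ?_⟩
    · rw [bump_comm u hji.symm, val_bump _ hi', val_bump u hi, bump_apply_of_ne u hji.symm]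
    · rw [val_bump _ hj', val_bump u hj, bump_apply_of_ne u hji]
  fin_cases s
  exacts [h0, h0.rotate, h0.rotate.rotate, h0.rotate.rotate.rotate]

theorem edgeVal_paramMatrix_inl (w : GridV m n) {a b : GridV m n} (h : gridAdj a b) :
    edgeVal (paramMatrix m n (.inl w)) a b = (if w = a then 1 else 0) - (if w = b then 1 else 0) :=
  edgeVal_of_adj _ h

theorem edgeVal_paramMatrix_inr_eq (kh : Σ k : Fin m, Fin (n k)) {i : Fin m}
    {a b c d : GridV m n} (hab : gridAdjDir i a b) (hdc : gridAdjDir i d c)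
    (hi : min (a i : ℕ) (b i) = min (d i : ℕ) (c i)) :
    edgeVal (paramMatrix m n (.inr kh)) a b = edgeVal (paramMatrix m n (.inr kh)) d c := by
  obtain ⟨k, h⟩ := kh
  rw [edgeVal_of_adj _ ⟨i, hab⟩, edgeVal_of_adj _ ⟨i, hdc⟩]
  show (if gridAdjDir k a b ∧ _ then (1 : ℝ) else 0) = if gridAdjDir k d c ∧ _ then 1 else 0
  by_cases hk : k = i
  · subst hk
    rw [hi]
    exact if_congr (and_congr (iff_of_true hab hdc) Iff.rfl) rfl rfl
  · rw [if_neg fun h' => hk (h'.1.unique hab), if_neg fun h' => hk (h'.1.unique hdc)]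

theorem circulation_paramMatrix (p : ParamRow m n) {a b c d : GridV m n}
    (h : IsUnitSquare a b c d) : circulation (paramMatrix m n p) a b c d = 0 := by
  obtain ⟨i, j, hab, hdc, hi, hbc, had, hj⟩ := h
  rcases p with w | kh
  · rw [circulation, edgeVal_paramMatrix_inl w ⟨i, hab⟩, edgeVal_paramMatrix_inl w ⟨j, hbc⟩,
      edgeVal_paramMatrix_inl w ⟨j, had⟩, edgeVal_paramMatrix_inl w ⟨i, hdc⟩]
    ring
  · rw [circulation, edgeVal_paramMatrix_inr_eq kh hab hdc hi,
      edgeVal_paramMatrix_inr_eq kh hbc had hj]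
    ring

theorem consMatrix_mul_transpose_paramMatrix : consMatrix m n * (paramMatrix m n)ᵀ = 0 := by
  ext ⟨q, s⟩ p
  change (consMatrix m n *ᵥ paramMatrix m n p) (q, s) = 0
  rw [consMatrix_mulVec, circulation_paramMatrix p (isUnitSquare_corner q s)]

end Orthogonality

noncomputable section Parametrization

theorem vecMul_paramMatrix (a : GridV m n → ℝ) (w : (Σ k : Fin m, Fin (n k)) → ℝ)
    (e : DirEdge m n) {k : Fin m} (hk : gridAdjDir k e.1.1 e.1.2) (h : Fin (n k))
    (hh : (h : ℕ) = min (e.1.1 k : ℕ) (e.1.2 k)) :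
    (Sum.elim a w ᵥ* paramMatrix m n) e = a e.1.1 - a e.1.2 + w ⟨k, h⟩ := by
  have hedge : ∀ kh', paramMatrix m n (.inr kh') e = if kh' = ⟨k, h⟩ then 1 else 0 := by
    rintro ⟨k', h'⟩
    show (if gridAdjDir k' _ _ ∧ _ then (1 : ℝ) else 0) = _
    refine if_congr ⟨fun hk' => ?_, fun hkh => ?_⟩ rfl rfl
    · obtain rfl := hk'.1.unique hk
      exact Sigma.ext rfl (heq_of_eq (Fin.ext (hk'.2.symm.trans hh.symm)))
    · cases hkh
      exact ⟨hk, hh.symm⟩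
  simp only [vecMul, dotProduct, Fintype.sum_sum_type, Sum.elim_inl, Sum.elim_inr, hedge]
  simp [paramMatrix, mul_sub]

variable (x : DirEdge m n → ℝ)

def symmPart (k : Fin m) (v : GridV m n) : ℝ :=
  edgeVal x v (bump v k) + edgeVal x (bump v k) v

/-- The edge parameter `W(k, i)`; meaningless for `i = n k`, where `bump` wraps around. -/
def levelParam (k : Fin m) (i : Fin (n k + 1)) : ℝ :=
  symmPart x k (Pi.single k i) / 2

def upPart (k : Fin m) (v : GridV m n) : ℝ :=
  edgeVal x v (bump v k) - levelParam x k (v k)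

variable {x}

theorem circulation_corner_eq_zero (hx : consMatrix m n *ᵥ x = 0) (q : SquareIdx m n)
    (s : Fin 4) :
    circulation x (q.corner s) (q.corner (s + 1)) (q.corner (s + 2)) (q.corner (s + 3)) = 0 := by
  rw [← consMatrix_mulVec, hx, Pi.zero_apply]

theorem edgeVal_curl (hx : consMatrix m n *ᵥ x = 0) {i j : Fin m} (hij : i ≠ j)
    {u : GridV m n} (hi : (u i : ℕ) < n i) (hj : (u j : ℕ) < n j) :
    edgeVal x u (bump u i) + edgeVal x (bump u i) (bump (bump u i) j) =
      edgeVal x u (bump u j) + edgeVal x (bump u j) (bump (bump u j) i) := by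
  wlog hlt : i < j
  · exact (this hx hij.symm hj hi (lt_of_le_of_ne (not_lt.1 hlt) hij.symm)).symm
  have h0 : circulation x u (bump u i) (bump (bump u i) j) (bump u j) = 0 :=
    circulation_corner_eq_zero hx ⟨((i, j), u), hlt, hi, hj⟩ 0
  rw [circulation] at h0
  rw [← bump_comm u hij]
  linear_combination h0

theorem symmPart_bump (hx : consMatrix m n *ᵥ x = 0) {k l : Fin m} (hkl : k ≠ l)
    {v : GridV m n} (hk : (v k : ℕ) < n k) (hl : (v l : ℕ) < n l) :
    symmPart x k (bump v l) = symmPart x k v := by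
  rcases hkl.lt_or_gt with hlt | hlt
  · have h0 : circulation x v (bump v k) (bump (bump v k) l) (bump v l) = 0 :=
      circulation_corner_eq_zero hx ⟨((k, l), v), hlt, hk, hl⟩ 0
    have h1 : circulation x (bump v k) (bump (bump v k) l) (bump v l) v = 0 :=
      circulation_corner_eq_zero hx ⟨((k, l), v), hlt, hk, hl⟩ 1
    rw [circulation, bump_comm v hkl] at h0 h1
    rw [symmPart, symmPart]
    linear_combination h1 - h0
  · have h0 : circulation x v (bump v l) (bump (bump v l) k) (bump v k) = 0 :=
      circulation_corner_eq_zero hx ⟨((l, k), v), hlt, hl, hk⟩ 0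
    have h3 : circulation x (bump v k) v (bump v l) (bump (bump v l) k) = 0 :=
      circulation_corner_eq_zero hx ⟨((l, k), v), hlt, hl, hk⟩ 3
    rw [circulation] at h0 h3
    rw [symmPart, symmPart]
    linear_combination h0 - h3

theorem symmPart_eq_two_mul_levelParam (hx : consMatrix m n *ᵥ x = 0) {k : Fin m}
    {v : GridV m n} (hk : (v k : ℕ) < n k) : symmPart x k v = 2 * levelParam x k (v k) := by
  rw [levelParam, mul_div_cancel₀ _ two_ne_zero]
  exact apply_eq_apply_single_of_bump fun w l hl hw hwl =>
    symmPart_bump hx hl.symm (hw ▸ hk) hwl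

theorem isCurlFree_upPart (hx : consMatrix m n *ᵥ x = 0) : IsCurlFree (upPart x) := by
  intro u i j hij hi hj
  have := edgeVal_curl hx hij hi hj
  simp only [upPart, bump_apply_of_ne u hij, bump_apply_of_ne u hij.symm]
  linear_combination this

theorem mem_span_paramMatrix (hx : consMatrix m n *ᵥ x = 0) :
    x ∈ span ℝ (Set.range (paramMatrix m n)) := by
  rw [mem_span_range_iff_exists_vecMul]
  refine ⟨Sum.elim (fun u => -potential (upPart x) u)
    (fun kh => levelParam x kh.1 kh.2.castSucc), funext fun e => ?_⟩
  obtain ⟨⟨p, q⟩, k, hk⟩ := e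
  change gridAdjDir k p q at hk
  have hpot : ∀ {u : GridV m n}, (u k : ℕ) < n k → potential (upPart x) (bump u k) -
      potential (upPart x) u = edgeVal x u (bump u k) - levelParam x k (u k) :=
    potential_bump_sub (isCurlFree_upPart hx)
  rw [← edgeVal_of_adj x ⟨k, hk⟩]
  rcases hk.eq_bump with ⟨hp, rfl⟩ | ⟨hq, rfl⟩
  · rw [vecMul_paramMatrix _ _ _ hk ((p k).castLT hp) (by simp [val_bump p hp])]
    simp only [Fin.castSucc_castLT]
    linear_combination hpot hp
  · rw [vecMul_paramMatrix _ _ _ hk ((q k).castLT hq) (by simp [val_bump q hq])]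
    simp only [Fin.castSucc_castLT]
    have hsymm := symmPart_eq_two_mul_levelParam hx hq
    rw [symmPart] at hsymm
    linear_combination -hpot hq - hsymm

end Parametrization

end Grid

/-- **Corollary 3.10.** The row spaces of `𝒮` and `𝒜` are orthogonal
complements of each other in `ℝ^{DirEdge}`: a vector lies in the row span of `𝒜` iff it is
orthogonal to every row of `𝒮`, and vice versa. -/
theorem rowspaces_orthogonal_complements {m : ℕ} (n : Fin m → ℕ) :
    (∀ x : DirEdge m n → ℝ,
      x ∈ Submodule.span ℝ (Set.range (paramMatrix m n)) ↔
        ∀ r : SquareIdx m n × Fin 4, ∑ e, consMatrix m n r e * x e = 0) ∧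
    (∀ x : DirEdge m n → ℝ,
      x ∈ Submodule.span ℝ (Set.range (consMatrix m n)) ↔
        ∀ r : ParamRow m n, ∑ e, paramMatrix m n r e * x e = 0) := by
  have hSA : consMatrix m n * (paramMatrix m n)ᵀ = 0 := consMatrix_mul_transpose_paramMatrix
  have hker : ∀ x, consMatrix m n *ᵥ x = 0 → x ∈ span ℝ (Set.range (paramMatrix m n)) :=
    fun _ => mem_span_paramMatrix
  refine ⟨fun x => ⟨fun hx => ?_, fun hx => hker x (funext hx)⟩, fun x => ?_⟩
  · exact funext_iff.1 (mulVec_eq_zero_of_mem_span_range hSA hx)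
  · exact (mem_span_range_iff_mulVec_eq_zero hSA hker x).trans funext_iff
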